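/- Let m ≥ 2^{n+1} + 1 and let G be the generalized lollipop graph consisting of a path r, v_n, …, v_1 of length n together with m internally disjoint paths of length 2 from v_1 to a common vertex u_0. Define w(r) = 0, w(v_j) = 2^j for 1 ≤ j ≤ n, and w(u) = 1 for u_0 and each of the m middle vertices. Then every configuration p on G with w(p) > w(1_G) = 2^{n+1} − 2 + (m + 1) is r-solvable, i.e., w is valid. -/

import Mathlib

/-!
Pebbles on the path `r, v_n, …, v_1` are worth `2^(j-1)` at `v_j` towards the root, and once this
path potential `P` reaches `2^n` the root is reached by pushing half of each pile one step up the
path. If `P` falls short by `t = 2^n - P`, the weight bound leaves at least `2t + m` pebbles on `u_0`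
and the middle vertices, and since `m ≥ 2t` these suffice to send `t` more pebbles to `v_1`: a
middle vertex with two pebbles sends one, and one with fewer is first topped up from `u_0`.
-/

open SimpleGraph Finset

def PebMove {V : Type*} [DecidableEq V] (G : SimpleGraph V) (p q : V → ℕ) : Prop :=
  ∃ u v, G.Adj u v ∧ 2 ≤ p u ∧
    q = fun x => if x = u then p u - 2 else if x = v then p v + 1 else p x

def Solvable {V : Type*} [DecidableEq V] (G : SimpleGraph V) (r : V) (p : V → ℕ) : Prop :=
  ∃ q, Relation.ReflTransGen (PebMove G) p q ∧ 1 ≤ q r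

noncomputable def confWeight {V : Type*} [Fintype V] (w : V → ℝ) (p : V → ℕ) : ℝ :=
  ∑ v, (p v : ℝ) * w v

def ValidWeight {V : Type*} [Fintype V] [DecidableEq V] (G : SimpleGraph V) (r : V)
    (w : V → ℝ) : Prop :=
  w r = 0 ∧ (∀ v, v ≠ r → 0 < w v) ∧
    ∀ p : V → ℕ, ¬ Solvable G r p → confWeight w p ≤ confWeight w (fun _ => 1)

noncomputable def rootedPebblingNumber {V : Type*} [Fintype V] [DecidableEq V]
    (G : SimpleGraph V) (r : V) : ℕ :=
  sInf {N | ∀ p : V → ℕ, N ≤ ∑ v, p v → Solvable G r p}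

noncomputable def pebblingNumber {V : Type*} [Fintype V] [DecidableEq V]
    (G : SimpleGraph V) : ℕ :=
  sInf {N | ∀ (r : V) (p : V → ℕ), N ≤ ∑ v, p v → Solvable G r p}

def cubeGraph (n : ℕ) : SimpleGraph (Fin n → Bool) :=
  SimpleGraph.fromRel (fun x y => hammingDist x y = 1)

def addPendant {V : Type*} (G : SimpleGraph V) (a : V) : SimpleGraph (Option V) :=
  SimpleGraph.fromRel (fun x y =>
    match x, y with
    | some u, some v => G.Adj u v
    | none, some u => u = a
    | _, _ => False)

def lollipop (n m : ℕ) : SimpleGraph (Fin (n + 1) ⊕ Fin (m + 1)) :=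
  SimpleGraph.fromRel (fun x y =>
    match x, y with
    | Sum.inl i, Sum.inl j => (i : ℕ) + 1 = (j : ℕ)
    | Sum.inl i, Sum.inr j => i = 0 ∧ j ≠ 0
    | Sum.inr i, Sum.inr j => i = 0 ∧ j ≠ 0
    | _, _ => False)

/-- Weight function on the lollipop: `Sum.inl i` is the path vertex `v_{i+1}`
(`Sum.inl n` being the root `r`), and `Sum.inr j` are the vertices `u_j`. -/
noncomputable def wL (n : ℕ) {m : ℕ} : (Fin (n + 1) ⊕ Fin (m + 1)) → ℝ
  | Sum.inl i => if (i : ℕ) = n then 0 else 2 ^ ((i : ℕ) + 1)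
  | Sum.inr _ => 1

theorem Finset.sum_add_eq_sum_add_of_eqOn_erase {ι M : Type*} [DecidableEq ι] [AddCommMonoid M]
    {s : Finset ι} {j : ι} {f g : ι → M} (hj : j ∈ s) (h : ∀ i ∈ s, i ≠ j → f i = g i) :
    ∑ i ∈ s, f i + g j = ∑ i ∈ s, g i + f j := by
  rw [← Finset.add_sum_erase s f hj, ← Finset.add_sum_erase s g hj,
    Finset.sum_congr rfl fun i hi => h i (Finset.mem_of_mem_erase hi) (Finset.ne_of_mem_erase hi)]
  abel

section Pebbling

variable {V : Type*} [DecidableEq V] {G : SimpleGraph V}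

theorem Solvable.of_reflTransGen {r : V} {p q : V → ℕ}
    (hpq : Relation.ReflTransGen (PebMove G) p q) (hq : Solvable G r q) : Solvable G r p :=
  let ⟨q', hqq', hr⟩ := hq
  ⟨q', hpq.trans hqq', hr⟩

theorem exists_reflTransGen_moves {u v : V} (huv : G.Adj u v) {c : ℕ} {p : V → ℕ}
    (hc : 2 * c ≤ p u) :
    ∃ q, Relation.ReflTransGen (PebMove G) p q ∧ q u = p u - 2 * c ∧ q v = p v + c ∧
      ∀ y, y ≠ u → y ≠ v → q y = p y := by
  induction c with
  | zero => exact ⟨p, .refl, by simp, rfl, fun _ _ _ => rfl⟩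
  | succ c ih =>
    obtain ⟨q, hpq, hqu, hqv, hq⟩ := ih (by omega)
    refine ⟨fun y => if y = u then q u - 2 else if y = v then q v + 1 else q y,
      hpq.tail ⟨u, v, huv, by omega, rfl⟩, ?_, ?_, fun y hyu hyv => ?_⟩
    · simp only [↓reduceIte, hqu]
      omega
    · simp only [if_neg huv.ne.symm, ↓reduceIte, hqv]
      omega
    · simp only [if_neg hyu, if_neg hyv, hq y hyu hyv]

theorem solvable_of_path {n : ℕ} (f : Fin (n + 1) → V) (hf : Function.Injective f)
    (hadj : ∀ i : Fin n, G.Adj (f i.castSucc) (f i.succ)) (p : V → ℕ)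
    (hp : 2 ^ n ≤ ∑ i, p (f i) * 2 ^ (i : ℕ)) : Solvable G (f (Fin.last n)) p := by
  induction n generalizing p with
  | zero => exact ⟨p, .refl, by simpa using hp⟩
  | succ n ih =>
    obtain ⟨q, hpq, -, hq1, hq⟩ :=
      exists_reflTransGen_moves (hadj 0) (c := p (f 0) / 2) (p := p) (by simp only [Fin.castSucc_zero]; omega)
    have hq_succ : ∀ i : Fin (n + 1),
        q (f i.succ) = p (f i.succ) + if i = 0 then p (f 0) / 2 else 0 := by
      intro i
      rcases eq_or_ne i 0 with rfl | hi
      · simpa using hq1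
      · rw [if_neg hi, add_zero]
        exact hq _ (by simpa using hf.ne (Fin.succ_ne_zero i))
          (hf.ne ((Fin.succ_injective _).ne hi))
    have hpot : 2 ^ n ≤ ∑ i : Fin (n + 1), q (f i.succ) * 2 ^ (i : ℕ) := by
      rw [Finset.sum_congr rfl fun i _ => by rw [hq_succ i]]
      simp only [add_mul, Finset.sum_add_distrib, ite_mul, zero_mul, Finset.sum_ite_eq',
        Finset.mem_univ, if_true]
      rw [Fin.sum_univ_succ] at hp
      have h2 : ∑ i : Fin (n + 1), p (f i.succ) * 2 ^ ((i.succ : Fin (n + 2)) : ℕ) =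
          2 * ∑ i : Fin (n + 1), p (f i.succ) * 2 ^ (i : ℕ) := by
        rw [Finset.mul_sum]
        exact Finset.sum_congr rfl fun i _ => by rw [Fin.val_succ, pow_succ]; ring
      simp only [Fin.val_zero, pow_zero, mul_one] at hp ⊢
      omega
    have := ih (f ∘ Fin.succ) (hf.comp (Fin.succ_injective _))
      (fun i => by simpa only [Function.comp_apply, Fin.succ_castSucc] using hadj i.succ) q hpot
    exact Solvable.of_reflTransGen hpq (by simpa using this)

theorem exists_reflTransGen_through {h j x : V} (hhj : G.Adj h j) (hjx : G.Adj j x)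
    (hhx : h ≠ x) {c : ℕ} {p : V → ℕ} (hc : 2 * c ≤ p h) (hj : 2 ≤ p j + c) :
    ∃ q, Relation.ReflTransGen (PebMove G) p q ∧ q h = p h - 2 * c ∧ q j = p j + c - 2 ∧
      q x = p x + 1 ∧ ∀ y, y ≠ h → y ≠ j → y ≠ x → q y = p y := by
  obtain ⟨q₁, hpq₁, hq₁h, hq₁j, hq₁⟩ := exists_reflTransGen_moves hhj hc
  obtain ⟨q₂, hq₁q₂, hq₂j, hq₂x, hq₂⟩ :=
    exists_reflTransGen_moves hjx (c := 1) (p := q₁) (by omega)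
  refine ⟨q₂, hpq₁.trans hq₁q₂, ?_, by omega, ?_, fun y hyh hyj hyx => ?_⟩
  · rw [hq₂ h hhj.ne hhx, hq₁h]
  · rw [hq₂x, hq₁ x hhx.symm hjx.ne.symm]
  · rw [hq₂ y hyj hyx, hq₁ y hyh hyj]

variable {x h : V} {M : Finset V}

/-- A pebble is sent to `x` through a fullest middle vertex, topped up from the hub `h` when it
holds fewer than two. Each delivery spends at most four units of the first budget and two of the
second; once no middle vertex holds two pebbles, the second budget is all on the hub and pays for
the top-up. -/
theorem exists_reflTransGen_deliver_one (hjx : ∀ j ∈ M, G.Adj j x)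
    (hhj : ∀ j ∈ M, G.Adj h j) (hxM : x ∉ M) (hhM : h ∉ M) (hhx : h ≠ x) (hM : M.Nonempty)
    {t : ℕ} {p : V → ℕ} (ha : 4 * (t + 1) ≤ p h + 2 * ∑ j ∈ M, p j)
    (hb : 2 * (t + 1) ≤ p h + ∑ j ∈ M, (p j - 1)) :
    ∃ q, Relation.ReflTransGen (PebMove G) p q ∧ q x = p x + 1 ∧
      (∀ y ∉ M, y ≠ h → y ≠ x → q y = p y) ∧
      4 * t ≤ q h + 2 * ∑ j ∈ M, q j ∧ 2 * t ≤ q h + ∑ j ∈ M, (q j - 1) := by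
  obtain ⟨j, hjM, hjmax⟩ := M.exists_max_image p hM
  have hsmall : p j ≤ 1 → ∑ i ∈ M, (p i - 1) = 0 := fun hj =>
    Finset.sum_eq_zero fun i hi => by have := hjmax i hi; omega
  have hzero : p j = 0 → ∑ i ∈ M, p i = 0 := fun hj =>
    Finset.sum_eq_zero fun i hi => by have := hjmax i hi; omega
  obtain ⟨q, hpq, hqh, hqj, hqx, hq⟩ := exists_reflTransGen_through (hhj j hjM) (hjx j hjM) hhx
    (c := 2 - p j) (p := p) (by omega) (by omega)
  have hqM : ∀ i ∈ M, i ≠ j → p i = q i := fun i hi hij =>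
    (hq i (ne_of_mem_of_not_mem hi hhM) hij (ne_of_mem_of_not_mem hi hxM)).symm
  have hsum := Finset.sum_add_eq_sum_add_of_eqOn_erase hjM hqM
  have hsum' := Finset.sum_add_eq_sum_add_of_eqOn_erase (f := fun i => p i - 1)
    (g := fun i => q i - 1) hjM fun i hi hij => by rw [hqM i hi hij]
  refine ⟨q, hpq, hqx, fun y hyM hyh hyx => hq y hyh (ne_of_mem_of_not_mem hjM hyM).symm hyx,
    by omega, by omega⟩

theorem exists_reflTransGen_deliver_of_budget (hjx : ∀ j ∈ M, G.Adj j x)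
    (hhj : ∀ j ∈ M, G.Adj h j) (hxM : x ∉ M) (hhM : h ∉ M) (hhx : h ≠ x) (hM : M.Nonempty)
    (t : ℕ) (p : V → ℕ) (ha : 4 * t ≤ p h + 2 * ∑ j ∈ M, p j)
    (hb : 2 * t ≤ p h + ∑ j ∈ M, (p j - 1)) :
    ∃ q, Relation.ReflTransGen (PebMove G) p q ∧ p x + t ≤ q x ∧ ∀ y ∉ M, y ≠ h → p y ≤ q y := by
  induction t generalizing p with
  | zero => exact ⟨p, .refl, le_rfl, fun _ _ _ => le_rfl⟩
  | succ t ih =>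
    obtain ⟨q, hpq, hqx, hq, ha', hb'⟩ :=
      exists_reflTransGen_deliver_one hjx hhj hxM hhM hhx hM ha hb
    obtain ⟨r, hqr, hrx, hr⟩ := ih q ha' hb'
    refine ⟨r, hpq.trans hqr, by omega, fun y hyM hyh => ?_⟩
    rcases eq_or_ne y x with rfl | hyx
    · omega
    · exact (hq y hyM hyh hyx).symm.le.trans (hr y hyM hyh)

theorem exists_reflTransGen_deliver (hjx : ∀ j ∈ M, G.Adj j x)
    (hhj : ∀ j ∈ M, G.Adj h j) (hxM : x ∉ M) (hhM : h ∉ M) (hhx : h ≠ x) (hM : M.Nonempty)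
    {t : ℕ} {p : V → ℕ} (ht : 2 * t ≤ M.card) (hp : 2 * t + M.card ≤ p h + ∑ j ∈ M, p j) :
    ∃ q, Relation.ReflTransGen (PebMove G) p q ∧ p x + t ≤ q x ∧ ∀ y ∉ M, y ≠ h → p y ≤ q y := by
  have hcard : ∑ j ∈ M, p j ≤ ∑ j ∈ M, (p j - 1) + M.card := by
    rw [Finset.card_eq_sum_ones, ← Finset.sum_add_distrib]
    exact Finset.sum_le_sum fun j _ => by omega
  exact exists_reflTransGen_deliver_of_budget hjx hhj hxM hhM hhx hM t p (by omega) (by omega)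

end Pebbling

section Lollipop

variable {n m : ℕ}

theorem lollipop_adj_inl_inl {i j : Fin (n + 1)} (h : (i : ℕ) + 1 = j) :
    (lollipop n m).Adj (Sum.inl i) (Sum.inl j) :=
  (fromRel_adj _ _ _).2 ⟨fun hij => by obtain rfl := Sum.inl_injective hij; omega, Or.inl h⟩

theorem lollipop_adj_inr_inl {j : Fin (m + 1)} (hj : j ≠ 0) :
    (lollipop n m).Adj (Sum.inr j) (Sum.inl 0) :=
  (fromRel_adj _ _ _).2 ⟨Sum.inr_ne_inl, Or.inr ⟨rfl, hj⟩⟩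

theorem lollipop_adj_inr_inr {j : Fin (m + 1)} (hj : j ≠ 0) :
    (lollipop n m).Adj (Sum.inr 0) (Sum.inr j) :=
  (fromRel_adj _ _ _).2 ⟨by simpa using hj.symm, Or.inl ⟨rfl, hj⟩⟩

variable (n m) in
def lollipopMiddle : Finset (Fin (n + 1) ⊕ Fin (m + 1)) :=
  (univ.erase 0).map Function.Embedding.inr

theorem forall_mem_lollipopMiddle {P : Fin (n + 1) ⊕ Fin (m + 1) → Prop} :
    (∀ y ∈ lollipopMiddle n m, P y) ↔ ∀ j : Fin (m + 1), j ≠ 0 → P (Sum.inr j) := by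
  simp [lollipopMiddle]

theorem card_lollipopMiddle : (lollipopMiddle n m).card = m := by
  simp [lollipopMiddle]

theorem solvable_lollipop_of_two_pow_le (p : Fin (n + 1) ⊕ Fin (m + 1) → ℕ)
    (hp : 2 ^ n ≤ ∑ i : Fin (n + 1), p (Sum.inl i) * 2 ^ (i : ℕ)) :
    Solvable (lollipop n m) (Sum.inl (Fin.last n)) p :=
  solvable_of_path Sum.inl Sum.inl_injective (fun _ => lollipop_adj_inl_inl (by simp)) p hp

theorem solvable_lollipop (hm : 2 ^ (n + 1) + 1 ≤ m) (p : Fin (n + 1) ⊕ Fin (m + 1) → ℕ)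
    (hp : 2 ^ (n + 1) + m ≤
      2 * ∑ i : Fin (n + 1), p (Sum.inl i) * 2 ^ (i : ℕ) + ∑ j, p (Sum.inr j)) :
    Solvable (lollipop n m) (Sum.inl (Fin.last n)) p := by
  set P := ∑ i : Fin (n + 1), p (Sum.inl i) * 2 ^ (i : ℕ)
  by_cases hP : 2 ^ n ≤ P
  · exact solvable_lollipop_of_two_pow_le p hP
  have hB : ∑ j, p (Sum.inr j) = p (Sum.inr 0) + ∑ y ∈ lollipopMiddle n m, p y := by
    rw [lollipopMiddle, Finset.sum_map]
    exact (Finset.add_sum_erase _ _ (Finset.mem_univ _)).symm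
  obtain ⟨q, hpq, hqx, hq⟩ := exists_reflTransGen_deliver (G := lollipop n m) (p := p)
    (t := 2 ^ n - P) (forall_mem_lollipopMiddle.2 fun _ => lollipop_adj_inr_inl)
    (forall_mem_lollipopMiddle.2 fun _ => lollipop_adj_inr_inr) (by simp [lollipopMiddle])
    (by simp [lollipopMiddle]) Sum.inr_ne_inl
    (by rw [← Finset.card_pos, card_lollipopMiddle]; omega)
    (by rw [card_lollipopMiddle, pow_succ] at *; omega) (by rw [card_lollipopMiddle, ← hB]; omega)
  refine Solvable.of_reflTransGen hpq (solvable_lollipop_of_two_pow_le q ?_)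
  have hpath : ∑ i : Fin n, p (Sum.inl i.succ) * 2 ^ (i.succ : ℕ) ≤
      ∑ i : Fin n, q (Sum.inl i.succ) * 2 ^ (i.succ : ℕ) :=
    Finset.sum_le_sum fun i _ =>
      Nat.mul_le_mul_right _ (hq _ (by simp [lollipopMiddle]) Sum.inl_ne_inr)
  simp only [P, Fin.sum_univ_succ, Fin.val_zero, pow_zero, mul_one] at hP hqx ⊢
  omega

theorem confWeight_wL (p : Fin (n + 1) ⊕ Fin (m + 1) → ℕ) :
    confWeight (wL n) p =
      ((2 * ∑ i : Fin n, p (Sum.inl i.castSucc) * 2 ^ (i : ℕ) + ∑ j, p (Sum.inr j) : ℕ) : ℝ) := by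
  have hw : ∀ i : Fin n, wL n (m := m) (Sum.inl i.castSucc) = 2 * 2 ^ (i : ℕ) := fun i => by
    simp [wL, i.isLt.ne, pow_succ, mul_comm]
  simp only [confWeight, Fintype.sum_sum_type, Fin.sum_univ_castSucc, hw]
  simp [wL, Finset.mul_sum, mul_left_comm]

end Lollipop

theorem stmt17_general (n m : ℕ) (hm : 2 ^ (n + 1) + 1 ≤ m) :
    (confWeight (wL n (m := m)) (fun _ => 1) = 2 ^ (n + 1) - 2 + (m + 1)) ∧
    ∀ p : (Fin (n + 1) ⊕ Fin (m + 1)) → ℕ,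
      ((2 : ℝ) ^ (n + 1) - 2 + (m + 1)) < confWeight (wL n) p →
      Solvable (lollipop n m) (Sum.inl (Fin.last n)) p := by
  refine ⟨?_, fun p hp => solvable_lollipop hm p ?_⟩
  · rw [confWeight_wL]
    push_cast
    rw [Fin.sum_univ_eq_sum_range (fun i => (1 : ℝ) * 2 ^ i), Finset.sum_const, Finset.card_univ,
      Fintype.card_fin]
    simp only [one_mul, geom_sum_eq (by norm_num : (2 : ℝ) ≠ 1)]
    ring
  · rw [confWeight_wL] at hp
    have hle : ∑ i : Fin n, p (Sum.inl i.castSucc) * 2 ^ (i : ℕ) ≤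
        ∑ i : Fin (n + 1), p (Sum.inl i) * 2 ^ (i : ℕ) := by
      rw [Fin.sum_univ_castSucc]
      exact Nat.le_add_right _ _
    have : 2 ^ (n + 1) + m < 2 * ∑ i : Fin n, p (Sum.inl i.castSucc) * 2 ^ (i : ℕ) +
        ∑ j, p (Sum.inr j) + 1 := by
      rw [← Nat.cast_lt (α := ℝ)]
      push_cast at hp ⊢
      linarith
    omega

theorem stmt17 (n m : ℕ) (hn : 1 ≤ n) (hm : 2 ^ (n + 1) + 1 ≤ m) :
    (confWeight (wL n (m := m)) (fun _ => 1) = 2 ^ (n + 1) - 2 + (m + 1)) ∧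
    ∀ p : (Fin (n + 1) ⊕ Fin (m + 1)) → ℕ,
      ((2 : ℝ) ^ (n + 1) - 2 + (m + 1)) < confWeight (wL n) p →
      Solvable (lollipop n m) (Sum.inl (Fin.last n)) p :=
  stmt17_general n m hm
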